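/- arXiv:2012.14254 — 4 statements merged into one kernel-verified Lean document; each statement's English description precedes it below -/
import Mathlib

section
/- Let s be a Nash equilibrium of the sum classic network creation game with graph G = G[s], let H be a non-trivial biconnected component of G, let u ∈ V(G), v ∈ V(H), and let e_1 = vv_1, …, e_l = vv_l be links of H bought by v. If xy is an edge of G with x ∈ A^{j,u}_{e_1,…,e_l}(v) and y ∉ A^{j,u}_{e_1,…,e_l}(v) for some 1 ≤ j ≤ l, then both x and y belong to V(H). -/
open SimpleGraph Finset
open scoped Classical

/-! ### The sum classic network creation game -/

/-- The communication network `G[s]` of a strategy profile `s`: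
an undirected graph on the players with an edge between `u` and `v`
iff `v ∈ s u` or `u ∈ s v`. -/
def commGraph (n : ℕ) (s : Fin n → Finset (Fin n)) : SimpleGraph (Fin n) :=
  SimpleGraph.fromRel (fun u v => v ∈ s u)

/-- A strategy profile is valid if no player buys a link to itself,
i.e. `s u ⊆ V ∖ {u}`. -/
def ValidProfile (n : ℕ) (s : Fin n → Finset (Fin n)) : Prop := ∀ u, u ∉ s u

/-- The (finite part of the) cost of player `u`:
`α·|s_u|` plus the sum of the distances from `u` to all other players. -/
noncomputable def gameCost (n : ℕ) (α : ℝ) (s : Fin n → Finset (Fin n)) (u : Fin n) : ℝ :=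
  α * (s u).card + ∑ v, ((commGraph n s).dist u v : ℝ)

/-- The cost of player `u`, with value `⊤` when the communication network
is disconnected. -/
noncomputable def gameCostE (n : ℕ) (α : ℝ) (s : Fin n → Finset (Fin n)) (u : Fin n) : EReal :=
  if (commGraph n s).Connected then ((gameCost n α s u : ℝ) : EReal) else ⊤

/-- Nash equilibrium of the sum classic network creation game: the communication
network is connected and no unilateral deviation strictly decreases the deviator's
cost (a deviation yielding a disconnected network has cost `+∞`, hence is never
an improvement and can be ignored). -/
def IsNE (n : ℕ) (α : ℝ) (s : Fin n → Finset (Fin n)) : Prop :=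
  ValidProfile n s ∧ (commGraph n s).Connected ∧
    ∀ (u : Fin n) (t : Finset (Fin n)), u ∉ t →
      (commGraph n (Function.update s u t)).Connected →
      gameCost n α s u ≤ gameCost n α (Function.update s u t) u

/-- Buying Nash equilibrium: no player can strictly decrease its cost by only
buying additional links (the deviated network is automatically connected). -/
def IsBuyingNE (n : ℕ) (α : ℝ) (s : Fin n → Finset (Fin n)) : Prop :=
  ValidProfile n s ∧ (commGraph n s).Connected ∧
    ∀ (u : Fin n) (t : Finset (Fin n)), u ∉ t → s u ⊆ t →
      gameCost n α s u ≤ gameCost n α (Function.update s u t) u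

/-! ### Biconnected components -/

/-- A graph is biconnected if it is connected and removing any single vertex
keeps it connected (no cut vertex). -/
def Biconnected {V : Type*} (G : SimpleGraph V) : Prop :=
  G.Connected ∧ ∀ v : V, (G.induce {w | w ≠ v}).Connected

/-- `S` is the vertex set of a biconnected component of `G`: it induces a
biconnected subgraph and is maximal with this property. -/
def IsBiconnectedComponent {V : Type*} (G : SimpleGraph V) (S : Set V) : Prop :=
  Biconnected (G.induce S) ∧ ∀ T : Set V, S ⊆ T → Biconnected (G.induce T) → T = S

/-- `deg_H^+(v)`: the number of links of the subgraph induced by `S` that are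
bought by `v`. -/
noncomputable def degHplus (n : ℕ) (s : Fin n → Finset (Fin n)) (S : Set (Fin n))
    (v : Fin n) : ℕ :=
  ((↑(s v) : Set (Fin n)) ∩ S).ncard

/-! ### A sets -/

/-- `z` belongs to the `A` set `A^u_{e_1,…,e_k}(v)` where the bought edges
`e_i = v vᵢ` have endpoints `vs`: every shortest path in `G` from `z` to `u`
passes through `v`, and the predecessor of `v` on any such path lies in `vs`. -/
def InAset {V : Type*} (G : SimpleGraph V) (u v : V) (vs : Set V) (z : V) : Prop :=
  ∀ p : G.Walk z u, p.length = G.dist z u →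
    ∃ i, 0 < i ∧ i ≤ p.length ∧ p.getVert i = v ∧ p.getVert (i - 1) ∈ vs

/-- `z` belongs to the set `A^{j,u}_{e_1,…,e_k}(v)`: it belongs to
`A^u_{e_1,…,e_k}(v)` and admits a shortest path to `u` through `v` whose
predecessor of `v` is `vj`. -/
def InAjset {V : Type*} (G : SimpleGraph V) (u v vj : V) (vs : Set V) (z : V) : Prop :=
  InAset G u v vs z ∧ ∃ p : G.Walk z u, p.length = G.dist z u ∧
    ∃ i, 0 < i ∧ i ≤ p.length ∧ p.getVert i = v ∧ p.getVert (i - 1) = vj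

/-! ### Auxiliary graphs -/

/-- The `k`-th power of a graph: distinct `u`, `v` are adjacent iff their
distance in `G` is at most `k`. -/
def powerGraph {V : Type*} (G : SimpleGraph V) (k : ℕ) : SimpleGraph V where
  Adj u v := u ≠ v ∧ G.dist u v ≤ k
  symm := ⟨fun u v h => ⟨h.1.symm, by rw [SimpleGraph.dist_comm]; exact h.2⟩⟩
  loopless := ⟨fun u h => h.1 rfl⟩

/-- A graph on `n` vertices is `ε`-distance-almost-uniform iff there is a
distance index `r` such that every vertex has at least `n(1−ε)` vertices at
distance exactly `r` or at distance exactly `r+1`. -/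
def DistanceAlmostUniform {V : Type*} (G : SimpleGraph V) (n : ℕ) (ε : ℝ) : Prop :=
  ∃ r : ℕ, ∀ u : V, (n : ℝ) * (1 - ε) ≤
    max ({z | G.dist u z = r}.ncard : ℝ) ({z | G.dist u z = r + 1}.ncard : ℝ)

/-- The crossing graph `Z` of a family of vertex sets `A i`: `i ≠ j` are
adjacent iff some edge of `G` joins `A i` and `A j`. -/
def crossGraph {V : Type*} {l : ℕ} (G : SimpleGraph V) (A : Fin l → Set V) :
    SimpleGraph (Fin l) :=
  SimpleGraph.fromRel (fun i j => ∃ x y, G.Adj x y ∧ x ∈ A i ∧ y ∈ A j)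

/-- The maximum diameter of a connected component of `Z`. -/
noncomputable def maxCompDiam {V : Type*} (Z : SimpleGraph V) : ℕ :=
  sSup {d | ∃ i j, Z.Reachable i j ∧ Z.dist i j = d}

/-!
Let `P` be a shortest path from `x` to `vⱼ` such that `P` followed by the edge `vⱼ v` is a
shortest path from `x` to `v` (it exists since `x ∈ A^{j,u}(v)`). It suffices to find a path `Q`
from `y` to `v` disjoint from `P`: then `vⱼ ⋯ x y ⋯ v` is a path between two distinct vertices
of the biconnected component `H`, and such a path stays inside `H`, since otherwise `H` together
with the path would be a larger biconnected subgraph.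

If `d(y, vⱼ) + 1 ≠ d(y, v)`, any shortest `y`–`v` path works, because a common vertex with `P`
would give a shortest `y`–`v` path ending with `vⱼ v`. Otherwise `y ∉ A^u(v)` (else
`y ∈ A^{j,u}(v)`), so some shortest `y`–`u` path either reaches `v` from some
`w ∉ {v₁, …, v_l}`, and its part up to `v` is disjoint from `P` because a common vertex would
make `w` the predecessor of `v` on a shortest `x`–`u` path; or it avoids `v`, and then it is
disjoint from `P` (else `x` would have a shortest path to `u` avoiding `v`), and returning from
`u` to `v` along the shortest `x`–`u` path through `vⱼ v` yields `Q`.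
-/

variable {V : Type*} {G : SimpleGraph V}

namespace SimpleGraph

def induceDiffSingletonIso (S : Set V) (c : S) :
    (G.induce S).induce {w | w ≠ c} ≃g G.induce (S \ {c.1}) where
  toFun w := ⟨w.1.1, w.1.2, fun h => w.2 (Subtype.ext h)⟩
  invFun w := ⟨⟨w.1, w.2.1⟩, fun h => w.2.2 (congrArg Subtype.val h)⟩
  left_inv _ := rfl
  right_inv _ := rfl
  map_rel_iff' := Iff.rfl

namespace Walk

theorem IsPath.exists_walk_avoiding {a b z c : V} {W : G.Walk a b}
    (hW : W.IsPath) (hz : z ∈ W.support) (hcz : c ≠ z) :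
    ∃ e ∈ ({a, b} : Set V), ∃ P : G.Walk z e, c ∉ P.support ∧ P.support ⊆ W.support := by
  by_cases hc : c ∈ (W.takeUntil z hz).support
  · refine ⟨b, Or.inr rfl, W.dropUntil z hz, fun hc' => ?_, W.support_dropUntil_subset_support hz⟩
    exact ((W.take_spec hz).symm ▸ hW).ne_of_mem_support_of_append hcz hc hc' rfl
  · refine ⟨a, Or.inl rfl, (W.takeUntil z hz).reverse, by simpa using hc, ?_⟩
    simpa using W.support_takeUntil_subset_support hz

theorem exists_eq_append_cons_of_getVert {a b v : V} {P : V → Prop} (p : G.Walk a b) {i : ℕ}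
    (hi0 : 0 < i) (hi : i ≤ p.length) (hv : p.getVert i = v) (hP : P (p.getVert (i - 1))) :
    ∃ w, P w ∧ ∃ (p₁ : G.Walk a w) (h : G.Adj w v) (p₂ : G.Walk v b),
      p = p₁.append (cons h p₂) := by
  induction p generalizing i with
  | nil => simp at hi; omega
  | cons h q ih =>
    rcases i with _ | _ | i
    · omega
    · simp only [getVert_cons_succ, getVert_zero] at hv hP
      subst hv
      exact ⟨_, hP, nil, h, q, rfl⟩
    · obtain ⟨w, hw, p₁, h', p₂, rfl⟩ :=
        ih (i := i + 1) (by omega) (by simpa using hi) (by simpa using hv) (by simpa using hP)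
      exact ⟨w, hw, cons h p₁, h', p₂, rfl⟩

theorem getVert_append_cons {a w v b : V} (p₁ : G.Walk a w) (h : G.Adj w v) (p₂ : G.Walk v b) :
    (p₁.append (cons h p₂)).getVert (p₁.length + 1) = v ∧
      (p₁.append (cons h p₂)).getVert p₁.length = w := by
  simp [getVert_append]

theorem dist_add_dist_of_mem_support {a b z : V} {p : G.Walk a b} (hp : p.length = G.dist a b)
    (hz : z ∈ p.support) : G.dist a z + G.dist z b = G.dist a b := by
  rw [← length_eq_dist_of_subwalk hp (p.isSubwalk_takeUntil hz),
    ← length_eq_dist_of_subwalk hp (p.isSubwalk_dropUntil hz), ← length_append, take_spec, hp]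

theorem length_eq_dist_of_append_cons {a b w v : V} {p₁ : G.Walk a w} {h : G.Adj w v}
    {p₂ : G.Walk v b} (hp : (p₁.append (cons h p₂)).length = G.dist a b) :
    p₁.length = G.dist a w ∧ G.dist a w + 1 = G.dist a v := by
  have hconcat := isSubwalk_of_append_left (concat_append p₁ h p₂).symm
  have hp₁ := length_eq_dist_of_subwalk hp ((isSubwalk_concat p₁ h).trans hconcat)
  refine ⟨hp₁, ?_⟩
  rw [← hp₁, ← length_eq_dist_of_subwalk hp hconcat, length_concat]

end Walk

open Walk

theorem Connected.dist_add_one_of_mem_support (hconn : G.Connected) {x a v z : V}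
    {p : G.Walk x a} (hp : p.length = G.dist x a) (hav : G.Adj a v)
    (hxa : G.dist x a + 1 = G.dist x v) (hz : z ∈ p.support) :
    G.dist z a + 1 = G.dist z v := by
  have h₁ := dist_add_dist_of_mem_support hp hz
  have h₂ := hconn.dist_triangle (u := x) (v := z) (w := v)
  have h₃ := hconn.dist_triangle (u := z) (v := a) (w := v)
  rw [dist_eq_one_iff_adj.mpr hav] at h₃
  omega

theorem Connected.notMem_support_of_dist_add_one (hconn : G.Connected) {x a v : V}
    {p : G.Walk x a} (hp : p.length = G.dist x a) (hav : G.Adj a v)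
    (hxa : G.dist x a + 1 = G.dist x v) : v ∉ p.support := fun hv => by
  simpa using hconn.dist_add_one_of_mem_support hp hav hxa hv

theorem Connected.dist_add_one_of_mem_support_of_mem_support (hconn : G.Connected)
    {x y a v z : V} {p : G.Walk x a} (hp : p.length = G.dist x a) (hav : G.Adj a v)
    (hxa : G.dist x a + 1 = G.dist x v) {q : G.Walk y v} (hq : q.length = G.dist y v)
    (hzp : z ∈ p.support) (hzq : z ∈ q.support) : G.dist y a + 1 = G.dist y v := by
  have h₁ := hconn.dist_add_one_of_mem_support hp hav hxa hzp
  have h₂ := dist_add_dist_of_mem_support hq hzq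
  have h₃ := hconn.dist_triangle (u := y) (v := z) (w := a)
  have h₄ := hconn.dist_triangle (u := y) (v := a) (w := v)
  rw [dist_eq_one_iff_adj.mpr hav] at h₄
  omega

end SimpleGraph

open SimpleGraph Walk

theorem biconnected_induce_iff {S : Set V} :
    Biconnected (G.induce S) ↔
      (G.induce S).Connected ∧ ∀ c ∈ S, (G.induce (S \ {c})).Connected :=
  and_congr Iff.rfl
    ⟨fun h c hc => (induceDiffSingletonIso S ⟨c, hc⟩).connected_iff.mp (h ⟨c, hc⟩),
      fun h c => (induceDiffSingletonIso S c).connected_iff.mpr (h c c.2)⟩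

namespace IsBiconnectedComponent

variable {S : Set V}

theorem support_subset_of_isPath (hS : IsBiconnectedComponent G S) {a b : V} (ha : a ∈ S)
    (hb : b ∈ S) (hab : a ≠ b) {W : G.Walk a b} (hW : W.IsPath) :
    {z | z ∈ W.support} ⊆ S := by
  set T := S ∪ {z | z ∈ W.support}
  suffices hT : Biconnected (G.induce T) from
    hS.2 T Set.subset_union_left hT ▸ Set.subset_union_right
  obtain ⟨hSconn, hSdel⟩ := biconnected_induce_iff.mp hS.1
  refine biconnected_induce_iff.mpr ⟨induce_union_connected hSconn.preconnected
    W.connected_induce_support.preconnected ⟨a, ha, W.start_mem_support⟩, fun c _ => ?_⟩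
  have hK : (G.induce (S \ {c})).Connected := by
    by_cases hc : c ∈ S
    · exact hSdel c hc
    · rwa [Set.sdiff_singleton_eq_self hc]
  have hKT : S \ {c} ⊆ T \ {c} := Set.sdiff_subset_sdiff_left Set.subset_union_left
  obtain ⟨r, hr⟩ : (S \ {c}).Nonempty := by
    by_cases hac : a = c
    · exact ⟨b, hb, fun h => hab (hac.trans h.symm)⟩
    · exact ⟨a, ha, hac⟩
  refine induce_connected_of_patches r (hKT hr) fun {z} hz => ?_
  rcases hz.1 with hzS | hzW
  · exact ⟨S \ {c}, hKT, hr, ⟨hzS, hz.2⟩, hK.preconnected _ _⟩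
  · obtain ⟨e, he, P, hcP, hPW⟩ := hW.exists_walk_avoiding hzW (Ne.symm hz.2)
    have heS : e ∈ S \ {c} := by
      refine ⟨?_, fun h => hcP (h ▸ P.end_mem_support)⟩
      rcases he with rfl | rfl
      exacts [ha, hb]
    refine ⟨S \ {c} ∪ {w | w ∈ P.support}, Set.union_subset hKT fun w hw =>
      ⟨Or.inr (hPW hw), fun h => hcP (h ▸ hw)⟩, Or.inl hr, Or.inr P.start_mem_support, ?_⟩
    exact (induce_union_connected hK.preconnected P.connected_induce_support.preconnected
      ⟨e, heS, P.end_mem_support⟩).preconnected _ _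

theorem mem_of_adj_of_disjoint (hS : IsBiconnectedComponent G S) {a b x y : V} (ha : a ∈ S)
    (hb : b ∈ S) (hab : a ≠ b) (hxy : G.Adj x y) {P : G.Walk x a} (hP : P.IsPath)
    {Q : G.Walk y b} (hQ : Q.IsPath) (hPQ : P.support.Disjoint Q.support) : x ∈ S ∧ y ∈ S := by
  have hW : (P.reverse.append (cons hxy Q)).IsPath := by
    rw [isPath_def, support_append, support_cons, List.tail_cons, support_reverse,
      List.nodup_append]
    exact ⟨List.nodup_reverse.mpr hP.support_nodup, hQ.support_nodup,
      fun z hz z' hz' h => hPQ (List.mem_reverse.mp hz) (h ▸ hz')⟩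
  have hsub := hS.support_subset_of_isPath ha hb hab hW
  exact ⟨hsub (by simp), hsub (by simp)⟩

end IsBiconnectedComponent

namespace InAset

variable {u v z : V} {vs : Set V}

theorem mem_support (hz : InAset G u v vs z) {p : G.Walk z u} (hp : p.length = G.dist z u) :
    v ∈ p.support := by
  obtain ⟨i, -, hi, hiv, -⟩ := hz p hp
  exact mem_support_iff_exists_getVert.mpr ⟨i, hiv, hi⟩

theorem dist_eq_add (hconn : G.Connected) (hz : InAset G u v vs z) :
    G.dist z u = G.dist z v + G.dist v u := by
  obtain ⟨p, hp⟩ := hconn.exists_walk_length_eq_dist z u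
  exact (dist_add_dist_of_mem_support hp (hz.mem_support hp)).symm

theorem mem_of_adj (hconn : G.Connected) (hz : InAset G u v vs z) {w : V} (hwv : G.Adj w v)
    (hzw : G.dist z w + 1 = G.dist z v) : w ∈ vs := by
  obtain ⟨p₁, hp₁⟩ := hconn.exists_walk_length_eq_dist z w
  obtain ⟨p₂, hp₂⟩ := hconn.exists_walk_length_eq_dist v u
  have hp : (p₁.append (cons hwv p₂)).length = G.dist z u := by
    rw [length_append, length_cons, hz.dist_eq_add hconn]
    omega
  obtain ⟨i, -, hi, hiv, hiw⟩ := hz _ hp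
  obtain ⟨hv, hw⟩ := getVert_append_cons p₁ hwv p₂
  have : i = p₁.length + 1 :=
    (p₁.append (cons hwv p₂)).isPath_of_length_eq_dist hp |>.getVert_injOn hi
      (by simp) (hiv.trans hv.symm)
  simpa [this, hw] using hiw

theorem inAjset (hconn : G.Connected) (hz : InAset G u v vs z) {vj : V} (hvj : G.Adj vj v)
    (hzvj : G.dist z vj + 1 = G.dist z v) : InAjset G u v vj vs z := by
  obtain ⟨p₁, hp₁⟩ := hconn.exists_walk_length_eq_dist z vj
  obtain ⟨p₂, hp₂⟩ := hconn.exists_walk_length_eq_dist v u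
  obtain ⟨hv, hw⟩ := getVert_append_cons p₁ hvj p₂
  refine ⟨hz, p₁.append (cons hvj p₂), ?_, p₁.length + 1, by omega, by simp, hv, by simpa using hw⟩
  rw [length_append, length_cons, hz.dist_eq_add hconn]
  omega

/-- A common vertex would make `w` the last step of a shortest `x`–`v` path as well. -/
theorem disjoint_support_concat (hconn : G.Connected) {x a : V} (hx : InAset G u v vs x)
    {p : G.Walk x a} (hp : p.length = G.dist x a) (hav : G.Adj a v)
    (hxa : G.dist x a + 1 = G.dist x v) {y w : V} (hw : w ∉ vs) {q : G.Walk y w}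
    (hq : q.length = G.dist y w) (hwv : G.Adj w v) (hyw : G.dist y w + 1 = G.dist y v) :
    p.support.Disjoint (q.concat hwv).support := by
  intro z hzp hzq
  have hzv : z ≠ v := fun h => hconn.notMem_support_of_dist_add_one hp hav hxa (h ▸ hzp)
  rw [support_concat, List.mem_append, List.mem_singleton] at hzq
  refine hw (hx.mem_of_adj hconn hwv ?_)
  refine hconn.dist_add_one_of_mem_support_of_mem_support hq hwv hyw (q := p.concat hav) ?_
    (hzq.resolve_right hzv) (by rw [support_concat]; exact List.mem_append_left _ hzp)
  rw [length_concat]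
  omega

theorem disjoint_support_of_notMem (hconn : G.Connected) {x a : V} (hx : InAset G u v vs x)
    {p : G.Walk x a} (hp : p.length = G.dist x a) (hav : G.Adj a v)
    (hxa : G.dist x a + 1 = G.dist x v) {y : V} {q : G.Walk y u} (hq : q.length = G.dist y u)
    (hvq : v ∉ q.support) : p.support.Disjoint q.support := by
  -- a common vertex `z` would give a shortest `x`–`u` walk through `z` avoiding `v`
  intro z hzp hzq
  have hvp := hconn.notMem_support_of_dist_add_one hp hav hxa
  have h₁ := dist_add_dist_of_mem_support hp hzp
  have h₂ := hconn.dist_add_one_of_mem_support hp hav hxa hzp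
  have h₃ := hconn.dist_triangle (u := z) (v := v) (w := u)
  have h₄ := hx.dist_eq_add hconn
  have hr : ((p.takeUntil z hzp).append (q.dropUntil z hzq)).length = G.dist x u := by
    rw [length_append, length_eq_dist_of_subwalk hp (p.isSubwalk_takeUntil hzp),
      length_eq_dist_of_subwalk hq (q.isSubwalk_dropUntil hzq)]
    have := hconn.dist_triangle (u := x) (v := z) (w := u)
    omega
  rcases (mem_support_append_iff _ _).mp (hx.mem_support hr) with h | h
  · exact hvp (p.support_takeUntil_subset_support hzp h)
  · exact hvq (q.support_dropUntil_subset_support hzq h)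

end InAset

theorem mem_of_inAjset_of_not_inAjset (hconn : G.Connected) {S : Set V}
    (hS : IsBiconnectedComponent G S) {u v vj x y : V} {vs : Set V} (hv : v ∈ S)
    (hvs : vs ⊆ S) (hvj : vj ∈ vs) (hxy : G.Adj x y) (hx : InAjset G u v vj vs x)
    (hy : ¬ InAjset G u v vj vs y) : x ∈ S ∧ y ∈ S := by
  obtain ⟨hxA, p, hp, i, hi0, hi, hiv, hivj⟩ := hx
  obtain ⟨w, hw, P, hvjv, P', rfl⟩ :=
    exists_eq_append_cons_of_getVert (P := (· = vj)) p hi0 hi hiv hivj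
  subst w
  obtain ⟨hP, hxvj⟩ := length_eq_dist_of_append_cons hp
  have ear : ∀ {Q : G.Walk y v}, Q.IsPath → P.support.Disjoint Q.support → x ∈ S ∧ y ∈ S :=
    hS.mem_of_adj_of_disjoint (hvs hvj) hv hvjv.ne hxy (P.isPath_of_length_eq_dist hP)
  by_cases hyvj : G.dist y vj + 1 = G.dist y v
  · have hyA : ¬ InAset G u v vs y := fun hyA => hy (hyA.inAjset hconn hvjv hyvj)
    simp only [InAset, not_forall] at hyA
    obtain ⟨q, hq, hqv⟩ := hyA
    by_cases hvq : v ∈ q.support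
    · obtain ⟨k, hkv, hk⟩ := mem_support_iff_exists_getVert.mp hvq
      have hk0 : 0 < k := Nat.pos_of_ne_zero fun h => by
        subst h
        rw [getVert_zero] at hkv
        simp [hkv] at hyvj
      obtain ⟨w, hw, q₁, hwv, q₂, rfl⟩ := exists_eq_append_cons_of_getVert (P := (· ∉ vs))
        q hk0 hk hkv fun h => hqv ⟨k, hk0, hk, hkv, h⟩
      obtain ⟨hq₁, hyw⟩ := length_eq_dist_of_append_cons hq
      refine ear ((q₁.concat hwv).isPath_of_length_eq_dist (by rw [length_concat]; omega)) ?_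
      exact hxA.disjoint_support_concat hconn hP hvjv hxvj hw hq₁ hwv hyw
    · have hPq := hxA.disjoint_support_of_notMem hconn hP hvjv hxvj hq hvq
      have hPP' : P.support.Disjoint P'.support := by
        have := (isPath_of_length_eq_dist _ hp).support_nodup
        rw [support_append, support_cons, List.tail_cons, List.nodup_append] at this
        exact fun z hz hz' => this.2.2 z hz z hz' rfl
      refine ear (q.append P'.reverse).bypass_isPath fun z hzP hzR => ?_
      rcases (mem_support_append_iff _ _).mp (support_bypass_subset_support _ hzR) with h | h
      · exact hPq hzP h
      · exact hPP' hzP (by simpa using h)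
  · obtain ⟨Y, hY⟩ := hconn.exists_walk_length_eq_dist y v
    exact ear (Y.isPath_of_length_eq_dist hY) fun z hzP hzY =>
      hyvj (hconn.dist_add_one_of_mem_support_of_mem_support hP hvjv hxvj hY hzP hzY)

theorem stmt_4_general (n : ℕ) (α : ℝ)
    (s : Fin n → Finset (Fin n)) (hs : IsNE n α s)
    (S : Set (Fin n)) (hS : IsBiconnectedComponent (commGraph n s) S)
    (u : Fin n) (v : Fin n) (hv : v ∈ S)
    (l : ℕ) (vm : Fin l → Fin n)
    (hvm : ∀ i, vm i ∈ s v ∧ vm i ∈ S)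
    (j : Fin l) (x y : Fin n) (hxy : (commGraph n s).Adj x y)
    (hx : InAjset (commGraph n s) u v (vm j) (Set.range vm) x)
    (hy : ¬ InAjset (commGraph n s) u v (vm j) (Set.range vm) y) :
    x ∈ S ∧ y ∈ S :=
  mem_of_inAjset_of_not_inAjset hs.2.1 hS hv (Set.range_subset_iff.mpr fun i => (hvm i).2)
    ⟨j, rfl⟩ hxy hx hy

/-- Let `H` be a non-trivial biconnected component (vertex set
`S`) of a NE graph `G`, `u ∈ V(G)`, `v ∈ S`, and `e_1 = v v₁, …, e_l = v v_l`
links of `H` bought by `v`. If `xy` is an edge of `G` with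
`x ∈ A^{j,u}_{e_1,…,e_l}(v)` and `y ∉ A^{j,u}_{e_1,…,e_l}(v)` then both `x` and
`y` belong to `S`. -/
theorem stmt_4 (n : ℕ) (α : ℝ) (hα : 0 < α)
    (s : Fin n → Finset (Fin n)) (hs : IsNE n α s)
    (S : Set (Fin n)) (hS : IsBiconnectedComponent (commGraph n s) S)
    (hS3 : 3 ≤ S.ncard)
    (u : Fin n) (v : Fin n) (hv : v ∈ S)
    (l : ℕ) (vm : Fin l → Fin n) (hinj : Function.Injective vm)
    (hvm : ∀ i, vm i ∈ s v ∧ vm i ∈ S)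
    (j : Fin l) (x y : Fin n) (hxy : (commGraph n s).Adj x y)
    (hx : InAjset (commGraph n s) u v (vm j) (Set.range vm) x)
    (hy : ¬ InAjset (commGraph n s) u v (vm j) (Set.range vm) y) :
    x ∈ S ∧ y ∈ S :=
  stmt_4_general n α s hs S hS u v hv l vm hvm j x y hxy hx hy
end

section
/- Let s be a buying Nash equilibrium of the sum classic network creation game with n players and parameter α > 0, with connected graph G = G[s] of diameter d. Then for every node u ∈ V(G) there exists a node v ∈ V(G) such that Σ_{i=1}^{d} |R^i_u(v)| ≥ n·d − 2α. -/
open SimpleGraph Finset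
open scoped Classical

/-! Buying the edge `xy` saves `x` at least `∑ z, (d(x,z) - d(y,z) - 1)⁺`, so in a buying
equilibrium this is at most `α`. Adding these bounds for the edges `zu` and `uz` over all `z` and
swapping the sums, the average over `v` of `∑ z, (|d(z,v) - d(u,v)| - 1)⁺` is at most `2α`.
Finally a node `z` lies in all but `(|d(z,v) - d(u,v)| - 1)⁺` of the sets `R^i_u(v)`,
`1 ≤ i ≤ d`. -/

namespace SimpleGraph

variable {V : Type*}

theorem Connected.dist_sub_dist_sub_one_add_dist_le {G G' : SimpleGraph V} (hG : G.Connected)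
    (hle : G ≤ G') {x y : V} (hxy : G'.Adj x y) (z : V) :
    G.dist x z - G.dist y z - 1 + G'.dist x z ≤ G.dist x z := by
  have h_anti : G'.dist x z ≤ G.dist x z := (hG.preconnected x z).dist_anti hle
  have h_via_y : G'.dist x z ≤ G'.dist x y + G'.dist y z := (hG.mono hle).dist_triangle
  have h_xy : G'.dist x y = 1 := dist_eq_one_iff_adj.mpr hxy
  have h_yz : G'.dist y z ≤ G.dist y z := (hG.preconnected y z).dist_anti hle
  omega

variable [Fintype V]

/-- What `x` saves in total distance by buying the edge `xy`; the truncated subtraction makes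
each summand the positive part of `dist x z - (dist y z + 1)`. -/
noncomputable def edgeGain (G : SimpleGraph V) (x y : V) : ℕ :=
  ∑ z, (G.dist x z - G.dist y z - 1)

@[simp]
theorem edgeGain_self (G : SimpleGraph V) (x : V) : G.edgeGain x x = 0 := by
  simp [edgeGain]

/-- The summand is `(|dist z v - dist u v| - 1)⁺`, written with truncated subtraction. -/
theorem exists_sum_dist_excess_le (G : SimpleGraph V) {α : ℝ}
    (hgain : ∀ x y, (G.edgeGain x y : ℝ) ≤ α) (u : V) :
    ∃ v, ((∑ z, ((G.dist z v - G.dist u v - 1) + (G.dist u v - G.dist z v - 1)) : ℕ) : ℝ)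
      ≤ 2 * α := by
  -- Averaging over `v`: the total excess is a sum of edge gains towards and from `u`.
  have h_total : ∑ v, ∑ z, ((G.dist z v - G.dist u v - 1) + (G.dist u v - G.dist z v - 1)) =
      ∑ z, (G.edgeGain z u + G.edgeGain u z) := by
    rw [Finset.sum_comm]
    simp only [edgeGain, Finset.sum_add_distrib]
  obtain ⟨v, -, hv⟩ := Finset.exists_le_of_sum_le (Finset.univ_nonempty_iff.mpr ⟨u⟩)
    (f := fun v =>
      ((∑ z, ((G.dist z v - G.dist u v - 1) + (G.dist u v - G.dist z v - 1)) : ℕ) : ℝ))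
    (g := fun _ => 2 * α) <| by
      rw [← Nat.cast_sum, h_total]
      push_cast
      exact Finset.sum_le_sum fun z _ => by linarith [hgain z u, hgain u z]
  exact ⟨v, hv⟩

end SimpleGraph

theorem commGraph_mono {n : ℕ} {s s' : Fin n → Finset (Fin n)} (h : ∀ x, s x ⊆ s' x) :
    commGraph n s ≤ commGraph n s' := by
  intro a b hab
  simp only [commGraph, SimpleGraph.fromRel_adj] at hab ⊢
  exact ⟨hab.1, hab.2.imp (fun hb => h a hb) (fun ha => h b ha)⟩

theorem commGraph_update_insert_adj {n : ℕ} (s : Fin n → Finset (Fin n)) {x y : Fin n}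
    (hxy : x ≠ y) : (commGraph n (Function.update s x (insert y (s x)))).Adj x y := by
  simp [commGraph, hxy]

theorem IsBuyingNE.edgeGain_le {n : ℕ} {α : ℝ} (hα : 0 ≤ α) {s : Fin n → Finset (Fin n)}
    (hs : IsBuyingNE n α s) (x y : Fin n) : ((commGraph n s).edgeGain x y : ℝ) ≤ α := by
  obtain ⟨hvalid, hconn, hbuy⟩ := hs
  rcases eq_or_ne x y with rfl | hxy
  · simp [hα]
  set s' := Function.update s x (insert y (s x))
  have hle : commGraph n s ≤ commGraph n s' := commGraph_mono fun z => by
    rcases eq_or_ne z x with rfl | hz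
    · simp [s']
    · simp [s', hz]
  have h_cost := hbuy x (insert y (s x)) (by simp [hxy, hvalid x]) (Finset.subset_insert y (s x))
  have h_price : α * (insert y (s x)).card ≤ α * ((s x).card + 1) :=
    mul_le_mul_of_nonneg_left (by exact_mod_cast Finset.card_insert_le y (s x)) hα
  have h_dist : (commGraph n s).edgeGain x y + ∑ z, (commGraph n s').dist x z ≤
      ∑ z, (commGraph n s).dist x z := by
    rw [SimpleGraph.edgeGain, ← Finset.sum_add_distrib]
    exact Finset.sum_le_sum fun z _ =>
      hconn.dist_sub_dist_sub_one_add_dist_le hle (commGraph_update_insert_adj s hxy) z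
  simp only [gameCost, Function.update_self] at h_cost
  have h_dist' : ((commGraph n s).edgeGain x y : ℝ) + ∑ z, ((commGraph n s').dist x z : ℝ) ≤
      ∑ z, ((commGraph n s).dist x z : ℝ) := by exact_mod_cast h_dist
  linarith

/-- Each `z` with `|a z - b| ≤ 1` lies in all `d` sets `{z | |a z - b| ≤ i}`, and otherwise
it misses only the `|a z - b| - 1` smallest ones. -/
theorem card_mul_le_sum_ncard_abs_sub_le_add {V : Type*} [Fintype V] (a : V → ℕ) (b d : ℕ) :
    Fintype.card V * d ≤
      ∑ i ∈ Icc 1 d, {z | |(a z : ℤ) - b| ≤ i}.ncard +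
        ∑ z, ((a z - b - 1) + (b - a z - 1)) := by
  have h_count : ∀ z, d ≤ #((Icc 1 d).filter fun i : ℕ => |(a z : ℤ) - b| ≤ i) +
      ((a z - b - 1) + (b - a z - 1)) := by
    intro z
    have h_filter : (Icc 1 d).filter (fun i : ℕ => |(a z : ℤ) - b| ≤ i) =
        Icc (max 1 ((a z - b) + (b - a z))) d := by
      ext i
      simp only [mem_filter, mem_Icc, abs_le]
      omega
    rw [h_filter, Nat.card_Icc]
    omega
  have h_swap : ∑ i ∈ Icc 1 d, {z | |(a z : ℤ) - b| ≤ i}.ncard =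
      ∑ z, #((Icc 1 d).filter fun i : ℕ => |(a z : ℤ) - b| ≤ i) := by
    simp only [Set.ncard_eq_toFinset_card', Set.toFinset_ofPred]
    exact (Finset.sum_card_bipartiteAbove_eq_sum_card_bipartiteBelow
      (s := univ) (t := Icc 1 d) fun z (i : ℕ) => |(a z : ℤ) - b| ≤ i).symm
  rw [h_swap, ← sum_add_distrib, ← smul_eq_mul, ← card_univ, ← sum_const]
  exact Finset.sum_le_sum fun z _ => h_count z

/-- For any buying NE graph `G` of diameter `d` and any node
`u` there is a node `v` with `Σ_{i=1}^{d} |R^i_u(v)| ≥ n·d − 2α`, where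
`R^i_u(v) = {z : |d_G(z,v) − d_G(u,v)| ≤ i}`. -/
theorem stmt_13 (n : ℕ) (α : ℝ) (hα : 0 < α)
    (s : Fin n → Finset (Fin n)) (hs : IsBuyingNE n α s) (u : Fin n) :
    ∃ v : Fin n,
      (n : ℝ) * (commGraph n s).diam - 2 * α ≤
        ∑ i ∈ Finset.Icc 1 ((commGraph n s).diam),
          ({z : Fin n |
              |((commGraph n s).dist z v : ℤ) - ((commGraph n s).dist u v : ℤ)| ≤
                (i : ℤ)}.ncard : ℝ) := by
  set G := commGraph n s
  obtain ⟨v, hv⟩ := G.exists_sum_dist_excess_le (hs.edgeGain_le hα.le) u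
  refine ⟨v, ?_⟩
  have h_count := card_mul_le_sum_ncard_abs_sub_le_add (G.dist · v) (G.dist u v) G.diam
  rw [Fintype.card_fin] at h_count
  have h_count' : (n : ℝ) * G.diam ≤ ∑ i ∈ Icc 1 G.diam,
      ({z | |(G.dist z v : ℤ) - G.dist u v| ≤ i}.ncard : ℝ) +
        ((∑ z, ((G.dist z v - G.dist u v - 1) + (G.dist u v - G.dist z v - 1)) : ℕ) : ℝ) := by
    exact_mod_cast h_count
  linarith
end

section
/- Let s be a Nash equilibrium of the sum classic network creation game with n players and parameter α > 0, with graph G = G[s], and let H be a non-trivial biconnected component of G with diameter at most 2. Then for every node v ∈ V(H): deg_H^+(v) ≤ 3n/α. -/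
open SimpleGraph Finset
open scoped Classical

/-!
Let `u ∈ H` be a vertex to which `v` buys a link. Since `H` is biconnected with at least three
vertices, `v` has a neighbour `x ≠ u` and `u` a neighbour `w ≠ v` in `H`. As `diam H ≤ 2`, some
walk from `x` to `w` has length at most `2`; it cannot use the edge `vu`, since neither `x` nor `w`
lies in `{v, u}`. So `v – x ⋯ w – u` is a detour of length at most `4`, and selling `vu` raises
the distance from `v` by at most `3`, and only for the set `A_u` of vertices every shortest path
to which starts with `vu`. The equilibrium condition gives `α ≤ 3 |A_u|`; the sets `A_u` are
pairwise disjoint, so `α · deg_H^+(v) ≤ 3n`.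
-/

namespace SimpleGraph

variable {V : Type*} {G : SimpleGraph V} {a b u v w x z : V}

lemma Walk.dist_deleteEdges_le_length {e : Sym2 V} (p : G.Walk a b) (he : e ∉ p.edges) :
    (G.deleteEdges {e}).dist a b ≤ p.length :=
  (dist_le (p.toDeleteEdge e he)).trans_eq (length_transfer ..)

lemma Walk.IsPath.eq_cons_of_mem_edges {p : G.Walk v z} (hp : p.IsPath)
    (he : s(v, u) ∈ p.edges) :
    ∃ (h : G.Adj v u) (q : G.Walk u z), p = cons h q ∧ s(v, u) ∉ q.edges := by
  cases p with
  | nil => simp at he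
  | cons hadj q =>
    have hvq : v ∉ q.support := (cons_isPath_iff _ _).mp hp |>.2
    have hq : s(v, u) ∉ q.edges := fun h => hvq (q.fst_mem_support_of_mem_edges h)
    rw [edges_cons, List.mem_cons] at he
    obtain rfl : _ = u := by
      rcases he with he | he
      · rcases Sym2.eq_iff.mp he with ⟨-, h⟩ | ⟨h, -⟩
        · exact h.symm
        · exact absurd h hadj.ne
      · exact absurd he hq
    exact ⟨hadj, q, rfl, hq⟩

lemma Walk.mem_or_mem_of_mem_edges_of_length_le_two {e : Sym2 V} {p : G.Walk a b}
    (hp : p.length ≤ 2) (he : e ∈ p.edges) : a ∈ e ∨ b ∈ e := by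
  match p, hp, he with
  | cons _ nil, _, he => simp_all
  | cons _ (cons _ nil), _, he =>
    simp only [edges_cons, edges_nil, List.mem_cons, List.not_mem_nil, or_false] at he
    rcases he with rfl | rfl <;> simp
  | cons _ (cons _ (cons _ _)), hp, _ => simp at hp

lemma exists_walk_deleteEdges_length_le_four_of_walk (hvx : G.Adj v x) (hxu : x ≠ u)
    (hwu : G.Adj w u) (hwv : w ≠ v) (Q : G.Walk x w) (hQ : Q.length ≤ 2) :
    ∃ W : (G.deleteEdges {s(v, u)}).Walk v u, W.length ≤ 4 := by
  have hQe : s(v, u) ∉ Q.edges := fun he => by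
    rcases Walk.mem_or_mem_of_mem_edges_of_length_le_two hQ he with h | h <;>
      simp only [Sym2.mem_iff] at h
    · exact h.elim hvx.ne' hxu
    · exact h.elim hwv hwu.ne
  have he : s(v, u) ∉ (Walk.cons hvx (Q.concat hwu)).edges := by
    simp only [Walk.edges_cons, Walk.edges_concat, List.concat_eq_append, List.mem_cons,
      List.mem_append, Sym2.eq_iff, not_or]
    grind [hvx.ne, hwu.ne]
  refine ⟨Walk.toDeleteEdge _ _ he, ?_⟩
  rw [Walk.length_transfer, Walk.length_cons, Walk.length_concat]
  omega

lemma exists_adj_ne_of_connected_induce_ne (hconn : (G.induce {w | w ≠ a}).Connected)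
    (hab : G.Adj a b) (hxa : x ≠ a) (hxb : x ≠ b) : ∃ c, G.Adj b c ∧ c ≠ a := by
  obtain ⟨p⟩ := hconn.preconnected ⟨b, hab.ne'⟩ ⟨x, hxa⟩
  cases p with
  | nil => exact absurd rfl hxb
  | @cons _ c _ h _ => exact ⟨c, by simpa using h, c.2⟩

lemma exists_walk_deleteEdges_length_le_four_of_diam_le_two {S : Set V}
    (hS : Biconnected (G.induce S)) (h3 : 3 ≤ S.ncard) (hdiam : (G.induce S).diam ≤ 2)
    (hv : v ∈ S) (hu : u ∈ S) (hvu : G.Adj v u) :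
    ∃ W : (G.deleteEdges {s(v, u)}).Walk v u, W.length ≤ 4 := by
  have : Finite S := Set.finite_of_ncard_pos (by omega)
  set v' : S := ⟨v, hv⟩
  set u' : S := ⟨u, hu⟩
  have : Nonempty S := ⟨v'⟩
  have hvu' : (G.induce S).Adj v' u' := by simpa using hvu
  obtain ⟨t, htv, htu⟩ := ENat.exists_ne_ne_of_three_le
    (by rw [ENat.card_eq_coe_natCard, Nat.card_coe_set_eq]; exact_mod_cast h3) v' u'
  obtain ⟨x, hvx, hxu⟩ := exists_adj_ne_of_connected_induce_ne (hS.2 u') hvu'.symm htu htv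
  obtain ⟨w, huw, hwv⟩ := exists_adj_ne_of_connected_induce_ne (hS.2 v') hvu' htv htu
  obtain ⟨Q, hQ⟩ := hS.1.exists_walk_length_eq_dist x w
  have hQ2 : Q.length ≤ 2 :=
    hQ ▸ (dist_le_diam (connected_iff_ediam_ne_top.mp hS.1)).trans hdiam
  have hQ' := (Walk.length_map (Embedding.induce S).toHom Q).trans_le hQ2
  exact exists_walk_deleteEdges_length_le_four_of_walk (by simpa using hvx)
    (fun h => hxu (Subtype.ext h)) (by simpa using huw.symm) (fun h => hwv (Subtype.ext h)) _ hQ'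

lemma dist_deleteEdges_le_dist_add {k : ℕ} (W : (G.deleteEdges {s(v, u)}).Walk v u)
    (hW : W.length ≤ k + 1) (hz : G.Reachable v z) :
    (G.deleteEdges {s(v, u)}).dist v z ≤ G.dist v z + k := by
  obtain ⟨p, hp, hlen⟩ := hz.exists_path_of_dist
  by_cases he : s(v, u) ∈ p.edges
  · obtain ⟨h, q, rfl, hq⟩ := hp.eq_cons_of_mem_edges he
    have := dist_le (W.append (q.toDeleteEdge _ hq))
    rw [Walk.length_append, Walk.length_transfer] at this
    rw [Walk.length_cons] at hlen
    omega
  · exact (p.dist_deleteEdges_le_length he).trans (hlen ▸ Nat.le_add_right _ _)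

section Fintype

variable [Fintype V]

noncomputable def distIncreaseSet (G : SimpleGraph V) (v u : V) : Finset V :=
  {z | G.dist v z < (G.deleteEdges {s(v, u)}).dist v z}

lemma snd_eq_of_mem_distIncreaseSet {p : G.Walk v z} (hp : p.length = G.dist v z)
    (hz : z ∈ G.distIncreaseSet v u) : p.snd = u := by
  have he : s(v, u) ∈ p.edges := by
    by_contra he
    have := p.dist_deleteEdges_le_length he
    simp only [distIncreaseSet, mem_filter, mem_univ, true_and] at hz
    omega
  obtain ⟨h, q, rfl, -⟩ := (p.isPath_of_length_eq_dist hp).eq_cons_of_mem_edges he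
  simp

/-- A shortest walk from `v` to `z` starts with the edge `vu` for each `u` with
`z ∈ G.distIncreaseSet v u`, so these sets are pairwise disjoint. -/
lemma sum_card_distIncreaseSet_le (hconn : G.Connected) (K : Finset V) :
    ∑ u ∈ K, #(G.distIncreaseSet v u) ≤ Fintype.card V := by
  rw [← card_biUnion]
  · exact card_le_univ _
  · intro u₁ _ u₂ _ hne
    refine Finset.disjoint_left.mpr fun z h₁ h₂ => hne ?_
    obtain ⟨p, hp⟩ := hconn.exists_walk_length_eq_dist v z
    exact (snd_eq_of_mem_distIncreaseSet hp h₁).symm.trans (snd_eq_of_mem_distIncreaseSet hp h₂)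

lemma sum_dist_deleteEdges_le {k : ℕ} (hconn : G.Connected)
    (W : (G.deleteEdges {s(v, u)}).Walk v u) (hW : W.length ≤ k + 1) :
    ∑ z, (G.deleteEdges {s(v, u)}).dist v z ≤
      ∑ z, G.dist v z + k * #(G.distIncreaseSet v u) := by
  calc ∑ z, (G.deleteEdges {s(v, u)}).dist v z
      ≤ ∑ z, (G.dist v z + if z ∈ G.distIncreaseSet v u then k else 0) := by
        refine sum_le_sum fun z _ => ?_
        split_ifs with hz
        · exact dist_deleteEdges_le_dist_add W hW (hconn v z)
        · simpa [distIncreaseSet] using hz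
    _ = ∑ z, G.dist v z + k * #(G.distIncreaseSet v u) := by
        rw [sum_add_distrib, sum_ite_mem, univ_inter, sum_const, smul_eq_mul, mul_comm]

end Fintype

end SimpleGraph

section NetworkCreationGame

variable {n : ℕ} {α : ℝ} {s : Fin n → Finset (Fin n)} {u v : Fin n}

lemma commGraph_adj {a b : Fin n} :
    (commGraph n s).Adj a b ↔ a ≠ b ∧ (b ∈ s a ∨ a ∈ s b) := by
  simp [commGraph]

lemma commGraph_update_sdiff_of_mem (h : v ∈ s u) :
    commGraph n (Function.update s v (s v \ {u})) = commGraph n s := by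
  ext a b
  simp only [commGraph_adj, Function.update_apply]
  grind

lemma commGraph_update_sdiff_of_not_mem (h : v ∉ s u) :
    commGraph n (Function.update s v (s v \ {u})) = (commGraph n s).deleteEdges {s(v, u)} := by
  ext a b
  simp only [commGraph_adj, deleteEdges_adj, Function.update_apply,
    Set.mem_singleton_iff, Sym2.eq_iff]
  grind

lemma IsNE.add_sum_dist_le (hs : IsNE n α s) (hu : u ∈ s v)
    (hconn : (commGraph n (Function.update s v (s v \ {u}))).Connected) :
    α + ∑ z, ((commGraph n s).dist v z : ℝ) ≤
      ∑ z, ((commGraph n (Function.update s v (s v \ {u}))).dist v z : ℝ) := by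
  have h := hs.2.2 v (s v \ {u}) (by simp [hs.1 v]) hconn
  have hcard : ((s v \ {u}).card : ℝ) = (s v).card - 1 := by
    rw [card_sdiff_of_subset (singleton_subset_iff.mpr hu), card_singleton,
      Nat.cast_sub (card_pos.mpr ⟨u, hu⟩), Nat.cast_one]
  rw [gameCost, gameCost, Function.update_self, hcard] at h
  linarith

lemma IsNE.not_mem_of_mem (hα : 0 < α) (hs : IsNE n α s) (hu : u ∈ s v) : v ∉ s u := by
  intro h
  have := hs.add_sum_dist_le hu (by rw [commGraph_update_sdiff_of_mem h]; exact hs.2.1)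
  rw [commGraph_update_sdiff_of_mem h] at this
  linarith

lemma IsNE.le_mul_card_distIncreaseSet (hα : 0 < α) (hs : IsNE n α s) (hu : u ∈ s v) {k : ℕ}
    (W : ((commGraph n s).deleteEdges {s(v, u)}).Walk v u) (hW : W.length ≤ k + 1) :
    α ≤ k * #((commGraph n s).distIncreaseSet v u) := by
  have hG := commGraph_update_sdiff_of_not_mem (hs.not_mem_of_mem hα hu)
  have hconn : ((commGraph n s).deleteEdges {s(v, u)}).Connected :=
    hs.2.1.connected_delete_edge_of_not_isBridge (by rw [isBridge_iff, not_not]; exact W.reachable)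
  have hsell := hs.add_sum_dist_le hu (hG ▸ hconn)
  rw [hG] at hsell
  have hdetour : ∑ z, (((commGraph n s).deleteEdges {s(v, u)}).dist v z : ℝ) ≤
      ∑ z, ((commGraph n s).dist v z : ℝ) + k * #((commGraph n s).distIncreaseSet v u) := by
    exact_mod_cast sum_dist_deleteEdges_le hs.2.1 W hW
  linarith

end NetworkCreationGame

/-- If `H` (vertex set `S`) is a non-trivial biconnected
component of a NE graph with diameter at most `2`, then `deg_H^+(v) ≤ 3n/α`
for every `v ∈ S`. -/
theorem stmt_15 (n : ℕ) (α : ℝ) (hα : 0 < α)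
    (s : Fin n → Finset (Fin n)) (hs : IsNE n α s)
    (S : Set (Fin n)) (hS : IsBiconnectedComponent (commGraph n s) S)
    (hS3 : 3 ≤ S.ncard)
    (hdH : ((commGraph n s).induce S).diam ≤ 2)
    (v : Fin n) (hv : v ∈ S) :
    (degHplus n s S v : ℝ) ≤ 3 * n / α := by
  set A := (commGraph n s).distIncreaseSet v
  set K := (s v).filter (· ∈ S)
  have hdeg : degHplus n s S v = #K := by
    rw [degHplus, ← Set.ncard_coe_finset]
    congr 1
    ext
    simp [K]
  have hK : ∀ u ∈ K, α ≤ 3 * #(A u) := fun u hu => by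
    rw [mem_filter] at hu
    have hvu : (commGraph n s).Adj v u :=
      commGraph_adj.mpr ⟨fun h => hs.1 v (h ▸ hu.1), Or.inl hu.1⟩
    obtain ⟨W, hW⟩ :=
      exists_walk_deleteEdges_length_le_four_of_diam_le_two hS.1 hS3 hdH hv hu.2 hvu
    exact_mod_cast hs.le_mul_card_distIncreaseSet hα hu.1 W (k := 3) hW
  have hA : ∑ u ∈ K, #(A u) ≤ n := by
    simpa using sum_card_distIncreaseSet_le hs.2.1 K (v := v)
  rw [hdeg, le_div_iff₀ hα]
  calc (#K : ℝ) * α = ∑ _u ∈ K, α := by rw [sum_const, nsmul_eq_mul]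
    _ ≤ ∑ u ∈ K, 3 * (#(A u) : ℝ) := sum_le_sum hK
    _ = 3 * ((∑ u ∈ K, #(A u) : ℕ) : ℝ) := by rw [Nat.cast_sum, mul_sum]
    _ ≤ 3 * n := by gcongr
end

section
/- Let s be a Nash equilibrium of the sum classic network creation game with n players and parameter α > 0, with graph G = G[s] of diameter d ≥ 8. Then for every node v ∈ V(G), the number of nodes z with d_G(v,z) ≤ ⌊d/8⌋ − 1 is at most 4α/d. -/
open SimpleGraph Finset
open scoped Classical

/-!
Let `u` be a vertex with `d ≤ 2 · dist(v, u)`, which exists by the triangle inequality through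
the endpoints of a diametral pair. If `u` buys the link `uv`, every `z` within distance
`⌊d/8⌋ − 1` of `v` comes at least `d/4` closer to `u`. By the equilibrium condition the total
decrease of `u`'s distance cost is at most the price `α` of the new link, so there are at most
`4α/d` such vertices `z`.
-/

namespace SimpleGraph

variable {V : Type*} {G G' : SimpleGraph V}

theorem Connected.exists_diam_le_two_mul_dist (hG : G.Connected) (v : V) :
    ∃ u, G.diam ≤ 2 * G.dist v u := by
  have : Nonempty V := hG.nonempty
  obtain ⟨x, y, hxy⟩ := G.exists_dist_eq_diam
  have htri : G.dist x y ≤ G.dist x v + G.dist v y := hG.dist_triangle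
  have hxv : G.dist x v = G.dist v x := SimpleGraph.dist_comm
  by_cases h : G.diam ≤ 2 * G.dist v x
  · exact ⟨x, h⟩
  · exact ⟨y, by omega⟩

theorem Connected.dist_add_dist_le_of_adj (hG : G.Connected) (h : G ≤ G') {u v : V}
    (hadj : G'.Adj u v) (z : V) :
    G.dist u v + G'.dist u z ≤ G.dist u z + 2 * G.dist v z + 1 := by
  have hG' : G'.dist u z ≤ G'.dist u v + G'.dist v z := (hG.mono h).dist_triangle
  have huv : G'.dist u v = 1 := dist_eq_one_iff_adj.2 hadj
  have hvz : G'.dist v z ≤ G.dist v z := (hG.preconnected v z).dist_anti h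
  have htri : G.dist u v ≤ G.dist u z + G.dist z v := hG.dist_triangle
  have hzv : G.dist z v = G.dist v z := SimpleGraph.dist_comm
  omega

end SimpleGraph

theorem Set.ncard_nsmul_le_sum {ι M : Type*} [Fintype ι] [AddCommMonoid M] [PartialOrder M]
    [IsOrderedAddMonoid M] {f : ι → M} (hf : ∀ i, 0 ≤ f i) {B : Set ι} {c : M}
    (hB : ∀ i ∈ B, c ≤ f i) : B.ncard • c ≤ ∑ i, f i := by
  classical
  rw [Set.ncard_eq_toFinset_card']
  calc B.toFinset.card • c ≤ ∑ i ∈ B.toFinset, f i :=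
        card_nsmul_le_sum _ _ _ fun i hi => hB i (Set.mem_toFinset.1 hi)
    _ ≤ ∑ i, f i := sum_le_sum_of_subset_of_nonneg (Finset.subset_univ _) fun i _ _ => hf i

section CommGraph

variable {n : ℕ} {s : Fin n → Finset (Fin n)}

theorem commGraph_adj_of_mem {u v : Fin n} (huv : u ≠ v) (h : v ∈ s u) :
    (commGraph n s).Adj u v :=
  (fromRel_adj _ _ _).2 ⟨huv, Or.inl h⟩

theorem commGraph_le_update_insert (u v : Fin n) :
    commGraph n s ≤ commGraph n (Function.update s u (insert v (s u))) := by
  have hsub : ∀ w, s w ⊆ Function.update s u (insert v (s u)) w := by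
    intro w
    rcases eq_or_ne w u with rfl | hw
    · simp
    · simp [Function.update_of_ne hw]
  intro a b hab
  rw [commGraph, fromRel_adj] at hab ⊢
  exact ⟨hab.1, hab.2.imp (fun h => hsub a h) (fun h => hsub b h)⟩

theorem IsNE.sum_dist_sub_le {α : ℝ} (hs : IsNE n α s) {u v : Fin n} (huv : u ≠ v)
    (hv : v ∉ s u) :
    ∑ z, ((commGraph n s).dist u z -
      (commGraph n (Function.update s u (insert v (s u)))).dist u z : ℝ) ≤ α := by
  obtain ⟨hvalid, hconn, hNE⟩ := hs
  have hcost := hNE u (insert v (s u)) (by simp [huv, hvalid u])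
    (hconn.mono (commGraph_le_update_insert u v))
  simp only [gameCost, Function.update_self, card_insert_of_notMem hv] at hcost
  rw [sum_sub_distrib]
  push_cast at hcost
  linarith

end CommGraph

theorem stmt_17_general (n : ℕ) (α : ℝ)
    (s : Fin n → Finset (Fin n)) (hs : IsNE n α s)
    (hd : 8 ≤ (commGraph n s).diam) (v : Fin n) :
    ({z : Fin n | (commGraph n s).dist v z ≤ (commGraph n s).diam / 8 - 1}.ncard : ℝ) ≤
      4 * α / (commGraph n s).diam := by
  set G := commGraph n s
  have hconn : G.Connected := hs.2.1
  obtain ⟨u, hu⟩ := hconn.exists_diam_le_two_mul_dist v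
  have huv : u ≠ v := by rintro rfl; rw [SimpleGraph.dist_self] at hu; omega
  have hv : v ∉ s u := fun h => by
    have : G.dist v u = 1 := dist_eq_one_iff_adj.2 (commGraph_adj_of_mem huv h).symm
    omega
  set G' := commGraph n (Function.update s u (insert v (s u)))
  have hle : G ≤ G' := commGraph_le_update_insert u v
  have hadj : G'.Adj u v := commGraph_adj_of_mem huv (by simp)
  have hsave : ∀ z ∈ {z | G.dist v z ≤ G.diam / 8 - 1},
      (G.diam : ℝ) / 4 ≤ G.dist u z - G'.dist u z := by
    intro z hz
    simp only [Set.mem_ofPred_eq] at hz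
    have hshort := hconn.dist_add_dist_le_of_adj hle hadj z
    have hvu : G.dist u v = G.dist v u := SimpleGraph.dist_comm
    have hnat : G.diam + 4 * G'.dist u z ≤ 4 * G.dist u z := by omega
    have hreal : (G.diam : ℝ) + 4 * G'.dist u z ≤ 4 * G.dist u z := by exact_mod_cast hnat
    linarith
  have hdecrease : ∀ z, (0 : ℝ) ≤ G.dist u z - G'.dist u z := fun z =>
    sub_nonneg.2 (by exact_mod_cast (hconn.preconnected u z).dist_anti hle)
  have hcount := (Set.ncard_nsmul_le_sum hdecrease hsave).trans (hs.sum_dist_sub_le huv hv)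
  rw [nsmul_eq_mul] at hcount
  have hdpos : (0 : ℝ) < G.diam := by exact_mod_cast (by omega : 0 < G.diam)
  rw [le_div_iff₀ hdpos]
  linarith

/-- For any NE graph `G` of diameter `d ≥ 8` and any node
`v`, the number of nodes at distance at most `⌊d/8⌋ − 1` from `v` is at most
`4α/d`. -/
theorem stmt_17 (n : ℕ) (α : ℝ) (hα : 0 < α)
    (s : Fin n → Finset (Fin n)) (hs : IsNE n α s)
    (hd : 8 ≤ (commGraph n s).diam) (v : Fin n) :
    ({z : Fin n | (commGraph n s).dist v z ≤ (commGraph n s).diam / 8 - 1}.ncard : ℝ) ≤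
      4 * α / (commGraph n s).diam :=
  stmt_17_general n α s hs hd v
end
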